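/- For every 1 ≤ j ≤ k and every 0 ≤ i ≤ ⌊(n_j−1)/2⌋, one has D(s_{i,j}) = f_{i,j}; in particular each s_{i,j} is a local slice for D. -/
import Mathlib


open MvPolynomial Finset

variable (𝕜 : Type) [Field 𝕜] [CharZero 𝕜] (k : ℕ) (n : Fin k → ℕ)

/- STATEMENT 6: `D(s_{i,j}) = f_{i,j}`; in particular each `s_{i,j}` is a local slice. -/

/-- The variable `x_{i,j}` (as `X ⟨j,i⟩`), or `0` if `i` is out of range. -/
noncomputable def Xv (j : Fin k) (i : ℕ) : MvPolynomial (Σ j : Fin k, Fin (n j + 1)) 𝕜 :=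
  if h : i ≤ n j then MvPolynomial.X ⟨j, ⟨i, Nat.lt_succ_of_le h⟩⟩ else 0

/-- The Weitzenböck derivation `D` with `D x_{0,j} = 0` and `D x_{i,j} = x_{i-1,j}`. -/
noncomputable def Dw : Derivation 𝕜 (MvPolynomial (Σ j : Fin k, Fin (n j + 1)) 𝕜)
    (MvPolynomial (Σ j : Fin k, Fin (n j + 1)) 𝕜) :=
  mkDerivation 𝕜 fun v => if (v.2 : ℕ) = 0 then 0 else Xv 𝕜 k n v.1 ((v.2 : ℕ) - 1)

/-- The invariants `f_{i,j}`. -/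
noncomputable def fP (j : Fin k) (i : ℕ) : MvPolynomial (Σ j : Fin k, Fin (n j + 1)) 𝕜 :=
  if i = 0 then Xv 𝕜 k n j 0
  else (∑ q ∈ Finset.range i, C ((-1 : 𝕜) ^ q) * Xv 𝕜 k n j q * Xv 𝕜 k n j (2 * i - q))
    + C ((-1 : 𝕜) ^ i / 2) * Xv 𝕜 k n j i ^ 2

/-- The local slices `s_{i,j}`. -/
noncomputable def sP (j : Fin k) (i : ℕ) : MvPolynomial (Σ j : Fin k, Fin (n j + 1)) 𝕜 :=
  if i = 0 then Xv 𝕜 k n j 1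
  else ∑ q ∈ Finset.range (i + 1),
    C ((-1 : 𝕜) ^ q * ((2 * i + 1 - 2 * q : ℕ) : 𝕜) / 2) * Xv 𝕜 k n j q * Xv 𝕜 k n j (2 * i + 1 - q)

set_option linter.unusedSectionVars false in
lemma Dw_C (a : 𝕜) : Dw 𝕜 k n (C a) = 0 := by
  rw [← MvPolynomial.algebraMap_eq]; exact Derivation.map_algebraMap _ a

set_option linter.unusedSectionVars false in
lemma Dw_Xv (j : Fin k) (q : ℕ) (hq : q ≤ n j) :
    Dw 𝕜 k n (Xv 𝕜 k n j q) = if q = 0 then 0 else Xv 𝕜 k n j (q - 1) := by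
  rw [Xv, dif_pos hq, Dw, mkDerivation_X]

set_option linter.unusedSectionVars false in
lemma Dw_Xv_succ (j : Fin k) (q : ℕ) (hq : q + 1 ≤ n j) :
    Dw 𝕜 k n (Xv 𝕜 k n j (q + 1)) = Xv 𝕜 k n j q := by
  rw [Dw_Xv 𝕜 k n j (q+1) hq, if_neg (Nat.succ_ne_zero q), Nat.add_sub_cancel]

set_option linter.unusedSectionVars false in
lemma Dw_Xv_zero (j : Fin k) : Dw 𝕜 k n (Xv 𝕜 k n j 0) = 0 := by
  rw [Dw_Xv 𝕜 k n j 0 (Nat.zero_le _), if_pos rfl]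

/-- Main computation: `D(s_{i,j}) = f_{i,j}`. -/
lemma Dw_sP (j : Fin k) (i : ℕ) (hi : 2 * i + 1 ≤ n j) :
    Dw 𝕜 k n (sP 𝕜 k n j i) = fP 𝕜 k n j i := by
  rcases Nat.eq_zero_or_pos i with rfl | hpos
  · rw [sP, if_pos rfl, fP, if_pos rfl]
    exact Dw_Xv_succ 𝕜 k n j 0 (by omega)
  have hine : i ≠ 0 := hpos.ne'
  rw [sP, if_neg hine, fP, if_neg hine, map_sum]
  have step : ∀ q ∈ Finset.range (i + 1),
      Dw 𝕜 k n (C ((-1 : 𝕜) ^ q * ((2 * i + 1 - 2 * q : ℕ) : 𝕜) / 2) * Xv 𝕜 k n j q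
        * Xv 𝕜 k n j (2 * i + 1 - q))
      = C ((-1 : 𝕜) ^ q * ((2 * i + 1 - 2 * q : ℕ) : 𝕜) / 2) *
          ((if q = 0 then 0 else Xv 𝕜 k n j (q - 1)) * Xv 𝕜 k n j (2 * i + 1 - q))
        + C ((-1 : 𝕜) ^ q * ((2 * i + 1 - 2 * q : ℕ) : 𝕜) / 2) *
          (Xv 𝕜 k n j q * Xv 𝕜 k n j (2 * i - q)) := by
    intro q hq
    rw [Finset.mem_range] at hq
    have h1 : 2 * i + 1 - q = (2 * i - q) + 1 := by omega
    rw [Derivation.leibniz, Derivation.leibniz, Dw_C, smul_zero, add_zero,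
      Dw_Xv 𝕜 k n j q (by omega), h1, Dw_Xv_succ 𝕜 k n j (2 * i - q) (by omega)]
    simp only [smul_eq_mul]
    rw [← h1]
    ring
  rw [Finset.sum_congr rfl step, Finset.sum_add_distrib]
  rw [Finset.sum_range_succ' (fun q => C ((-1 : 𝕜) ^ q * ((2 * i + 1 - 2 * q : ℕ) : 𝕜) / 2) *
      ((if q = 0 then 0 else Xv 𝕜 k n j (q - 1)) * Xv 𝕜 k n j (2 * i + 1 - q))) i]
  rw [Finset.sum_range_succ (fun q => C ((-1 : 𝕜) ^ q * ((2 * i + 1 - 2 * q : ℕ) : 𝕜) / 2) *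
      (Xv 𝕜 k n j q * Xv 𝕜 k n j (2 * i - q))) i]
  simp only [if_pos rfl, if_true, if_neg (Nat.succ_ne_zero _), Nat.add_sub_cancel, mul_zero,
    zero_mul, add_zero]
  have hlast : ((2 * i + 1 - 2 * i : ℕ) : 𝕜) = 1 := by norm_num
  rw [← add_assoc, ← Finset.sum_add_distrib]
  congr 1
  · apply Finset.sum_congr rfl
    intro q hq
    rw [Finset.mem_range] at hq
    have h2 : 2 * i + 1 - (q + 1) = 2 * i - q := by omega
    rw [h2, ← add_mul, ← C_add]
    have e1 : ((2 * i + 1 - 2 * (q + 1) : ℕ) : 𝕜) = 2 * i - 1 - 2 * q := by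
      have h3 : (2 * i + 1 - 2 * (q + 1) : ℕ) = 2 * i - 1 - 2 * q := by omega
      have h4 : (2 * i - 1 - 2 * q : ℕ) = 2 * i - (1 + 2 * q) := by omega
      rw [h3, h4, Nat.cast_sub (by omega)]
      push_cast
      ring
    have e2 : ((2 * i + 1 - 2 * q : ℕ) : 𝕜) = 2 * i + 1 - 2 * q := by
      rw [Nat.cast_sub (by omega)]
      push_cast
      ring
    have e3 : (-1 : 𝕜) ^ (q + 1) * ((2 * i + 1 - 2 * (q + 1) : ℕ) : 𝕜) / 2
        + (-1 : 𝕜) ^ q * ((2 * i + 1 - 2 * q : ℕ) : 𝕜) / 2 = (-1 : 𝕜) ^ q := by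
      rw [e1, e2, pow_succ]
      ring
    rw [e3]
    ring
  · rw [hlast, show 2 * i - i = i from by omega, sq,
      show ((-1 : 𝕜) ^ i * 1 / 2) = (-1 : 𝕜) ^ i / 2 from by ring]

/-- `D(f_{i,j}) = 0`. -/
lemma Dw_fP (j : Fin k) (i : ℕ) (hi : 2 * i ≤ n j) :
    Dw 𝕜 k n (fP 𝕜 k n j i) = 0 := by
  rcases Nat.eq_zero_or_pos i with rfl | hpos
  · rw [fP, if_pos rfl]; exact Dw_Xv_zero 𝕜 k n j
  have hine : i ≠ 0 := hpos.ne'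
  obtain ⟨m, rfl⟩ : ∃ m, i = m + 1 := ⟨i - 1, by omega⟩
  rw [fP, if_neg hine, map_add, map_sum]
  have step : ∀ q ∈ Finset.range (m + 1),
      Dw 𝕜 k n (C ((-1 : 𝕜) ^ q) * Xv 𝕜 k n j q * Xv 𝕜 k n j (2 * (m + 1) - q))
      = C ((-1 : 𝕜) ^ q) *
          ((if q = 0 then 0 else Xv 𝕜 k n j (q - 1)) * Xv 𝕜 k n j (2 * (m + 1) - q))
        + C ((-1 : 𝕜) ^ q) * (Xv 𝕜 k n j q * Xv 𝕜 k n j (2 * (m + 1) - 1 - q)) := by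
    intro q hq
    rw [Finset.mem_range] at hq
    have h1 : 2 * (m + 1) - q = (2 * (m + 1) - 1 - q) + 1 := by omega
    rw [Derivation.leibniz, Derivation.leibniz, Dw_C, smul_zero, add_zero,
      Dw_Xv 𝕜 k n j q (by omega), h1, Dw_Xv_succ 𝕜 k n j (2 * (m + 1) - 1 - q) (by omega)]
    simp only [smul_eq_mul]
    rw [← h1]
    ring
  rw [Finset.sum_congr rfl step, Finset.sum_add_distrib]
  have hsq : Dw 𝕜 k n (C ((-1 : 𝕜) ^ (m + 1) / 2) * Xv 𝕜 k n j (m + 1) ^ 2)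
      = C ((-1 : 𝕜) ^ (m + 1)) * (Xv 𝕜 k n j m * Xv 𝕜 k n j (m + 1)) := by
    rw [sq, Derivation.leibniz, Derivation.leibniz, Dw_C, smul_zero, add_zero,
      Dw_Xv_succ 𝕜 k n j m (by omega)]
    simp only [smul_eq_mul]
    have hC : (C ((-1 : 𝕜) ^ (m + 1) / 2) : MvPolynomial (Σ j : Fin k, Fin (n j + 1)) 𝕜)
        * C 2 = C ((-1 : 𝕜) ^ (m + 1)) := by
      rw [← C_mul, div_mul_cancel₀ _ (two_ne_zero)]
    have hC2 : (C (2 : 𝕜) : MvPolynomial (Σ j : Fin k, Fin (n j + 1)) 𝕜) = 2 := by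
      rw [show (2 : 𝕜) = 1 + 1 by norm_num, map_add, map_one]; norm_num
    rw [← hC, hC2]
    ring
  rw [hsq]
  rw [Finset.sum_range_succ' (fun q => C ((-1 : 𝕜) ^ q) *
      ((if q = 0 then 0 else Xv 𝕜 k n j (q - 1)) * Xv 𝕜 k n j (2 * (m + 1) - q))) m]
  rw [Finset.sum_range_succ (fun q => C ((-1 : 𝕜) ^ q) *
      (Xv 𝕜 k n j q * Xv 𝕜 k n j (2 * (m + 1) - 1 - q))) m]
  simp only [if_pos rfl, if_true, if_neg (Nat.succ_ne_zero _), Nat.add_sub_cancel, mul_zero,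
    zero_mul, add_zero]
  have cancel : ∀ q ∈ Finset.range m,
      C ((-1 : 𝕜) ^ (q + 1)) * (Xv 𝕜 k n j q * Xv 𝕜 k n j (2 * (m + 1) - (q + 1)))
      = - (C ((-1 : 𝕜) ^ q) * (Xv 𝕜 k n j q * Xv 𝕜 k n j (2 * (m + 1) - 1 - q))) := by
    intro q hq
    have h2 : 2 * (m + 1) - (q + 1) = 2 * (m + 1) - 1 - q := by omega
    rw [h2, pow_succ, mul_neg_one, map_neg]
    ring
  rw [Finset.sum_congr rfl cancel, Finset.sum_neg_distrib]
  have h3 : 2 * (m + 1) - 1 - m = m + 1 := by omega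
  rw [h3, pow_succ, mul_neg_one, map_neg]
  ring

theorem D_s_eq_f (𝕜 : Type) [Field 𝕜] [CharZero 𝕜] (k : ℕ) (hk : 1 ≤ k) (n : Fin k → ℕ)
    (j : Fin k) (i : ℕ) (hi : 2 * i + 1 ≤ n j) :  -- i.e. `0 ≤ i ≤ ⌊(n_j - 1)/2⌋`
    Dw 𝕜 k n (sP 𝕜 k n j i) = fP 𝕜 k n j i ∧
    -- in particular, `s_{i,j}` is a local slice: `D(s_{i,j}) ∈ ker D`
    Dw 𝕜 k n (Dw 𝕜 k n (sP 𝕜 k n j i)) = 0 := by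
  refine ⟨Dw_sP 𝕜 k n j i hi, ?_⟩
  rw [Dw_sP 𝕜 k n j i hi]
  exact Dw_fP 𝕜 k n j i (by omega)
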